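/- arXiv:2307.14264 — 2 statements merged into one kernel-verified Lean document; each statement's English description precedes it below -/
import Mathlib

section
/- Let p, q be patterns and let q' be obtained from q by removing from every set of q all labels in lbs(q) \ lbs(p). Then p ∼ q if and only if p ∼ q'. -/
open Finset
open scoped Classical

namespace PatternST

variable {α : Type*} [DecidableEq α]

/-- `p` is a pattern over ground set `U` with zero element `z`:
a family of subsets of `U ∪ {z}` with exactly one member containing `z`. -/
def IsPattern (z : α) (U : Finset α) (p : Finset (Finset α)) : Prop :=
  (∀ S ∈ p, S ⊆ insert z U) ∧ ∃! S, S ∈ p ∧ z ∈ S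

/-- Two sets are linked if one belongs to `p`, the other to `q`, and they intersect. -/
def linkRel (p q : Finset (Finset α)) (S T : Finset α) : Prop :=
  ((S ∈ p ∧ T ∈ q) ∨ (S ∈ q ∧ T ∈ p)) ∧ (S ∩ T).Nonempty

/-- Reflexive-transitive (and, by symmetry of `linkRel`, symmetric) closure. -/
def conn (p q : Finset (Finset α)) : Finset α → Finset α → Prop :=
  Relation.ReflTransGen (linkRel p q)

/-- The join `p ⋈ q`: unions of the equivalence classes of `conn` on `p ∪ q`. -/
noncomputable def pjoin (p q : Finset (Finset α)) : Finset (Finset α) :=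
  (p ∪ q).image fun S => ((p ∪ q).filter fun T => conn p q S T).sup id

/-- `p` and `q` are consistent if `p ⋈ q` consists of a single set. -/
def consistent (p q : Finset (Finset α)) : Prop := (pjoin p q).card = 1

/-- The labels (elements of `U`, i.e. everything except `z`) occurring in `p`. -/
def lbs (z : α) (p : Finset (Finset α)) : Finset α := (p.sup id).erase z

/-- The labels appearing as singletons in `p`. -/
def sing (z : α) (p : Finset (Finset α)) : Finset α :=
  (lbs z p).filter fun u => ({u} : Finset α) ∈ p

/-- A pattern is complete if every occurring label occurs as a singleton. -/
def Complete (z : α) (p : Finset (Finset α)) : Prop := lbs z p = sing z p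

/-! The labels `D = lbs q \ lbs p` meet no set of `p`, so removing them fixes `p`, and an element
surviving in a set of `q` also lies in a set of `p` (the label `z` lies in the zero set of `p`).
Consistency means that every set of `p ∪ q` is connected to the zero set `A` of `p`, which the
removal fixes. Links of `p ⋈ q` survive the removal. Conversely, a link between trimmed sets is
witnessed by an element lying both in a set of `p` and in a set of `q`, and all sets of `p ∪ q`
containing such an element are connected already in `p ⋈ q`; so chains lift back. -/

section Join

variable {p q : Finset (Finset α)} {S T : Finset α}

theorem linkRel.symm (h : linkRel p q S T) : linkRel p q T S :=
  ⟨h.1.symm.imp And.symm And.symm, by rw [inter_comm]; exact h.2⟩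

theorem conn_symm (h : conn p q S T) : conn p q T S := by
  induction h with
  | refl => exact .refl
  | tail _ hlink ih => exact ih.head hlink.symm

theorem conn_of_mem_of_mem {x : α} (hxp : ∃ P ∈ p, x ∈ P) (hxq : ∃ Q ∈ q, x ∈ Q)
    (hS : S ∈ p ∪ q) (hxS : x ∈ S) (hT : T ∈ p ∪ q) (hxT : x ∈ T) : conn p q S T := by
  obtain ⟨P, hP, hxP⟩ := hxp
  obtain ⟨Q, hQ, hxQ⟩ := hxq
  have conn_Q : ∀ R ∈ p ∪ q, x ∈ R → conn p q R Q := by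
    intro R hR hxR
    rcases mem_union.1 hR with hR | hR
    · exact .single ⟨.inl ⟨hR, hQ⟩, x, mem_inter.2 ⟨hxR, hxQ⟩⟩
    · exact .tail (.single ⟨.inr ⟨hR, hP⟩, x, mem_inter.2 ⟨hxR, hxP⟩⟩)
        ⟨.inl ⟨hP, hQ⟩, x, mem_inter.2 ⟨hxP, hxQ⟩⟩
  exact (conn_Q S hS hxS).trans (conn_symm (conn_Q T hT hxT))

noncomputable def connClass (p q : Finset (Finset α)) (S : Finset α) : Finset α :=
  ((p ∪ q).filter fun T => conn p q S T).sup id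

theorem pjoin_eq_image_connClass : pjoin p q = (p ∪ q).image (connClass p q) := rfl

theorem connClass_eq_self (hS : S ∈ p ∪ q) (h : ∀ B, ¬ linkRel p q S B) :
    connClass p q S = S := by
  suffices ((p ∪ q).filter fun T => conn p q S T) = {S} by
    rw [connClass, this, sup_singleton, id]
  ext T
  simp only [mem_filter, mem_singleton]
  refine ⟨fun ⟨_, hST⟩ => ?_, by rintro rfl; exact ⟨hS, .refl⟩⟩
  rcases hST.cases_head with hST | ⟨B, hSB, -⟩
  · exact hST.symm
  · exact absurd hSB (h B)

theorem conn_of_linkRel_of_connClass_eq {B : Finset α} (hT : T ∈ p ∪ q) (hTB : linkRel p q T B)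
    (h : connClass p q S = connClass p q T) : conn p q S T := by
  obtain ⟨hmem, x, hx⟩ := hTB
  obtain ⟨hxT, hxB⟩ := mem_inter.1 hx
  have hx_class : x ∈ connClass p q S :=
    h ▸ le_sup (f := id) (mem_filter.2 ⟨hT, .refl⟩) hxT
  obtain ⟨C, hC, hxC⟩ := mem_sup.1 hx_class
  obtain ⟨hC, hSC⟩ := mem_filter.1 hC
  have hx_shared : (∃ P ∈ p, x ∈ P) ∧ ∃ Q ∈ q, x ∈ Q := by
    rcases hmem with ⟨hTp, hBq⟩ | ⟨hTq, hBp⟩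
    exacts [⟨⟨T, hTp, hxT⟩, B, hBq, hxB⟩, ⟨⟨B, hBp, hxB⟩, T, hTq, hxT⟩]
  exact hSC.trans (conn_of_mem_of_mem hx_shared.1 hx_shared.2 hC hxC hT hxT)

theorem conn_of_connClass_eq (hS : S ∈ p ∪ q) (hT : T ∈ p ∪ q)
    (h : connClass p q S = connClass p q T) : conn p q S T := by
  by_cases hT_linked : ∃ B, linkRel p q T B
  · obtain ⟨B, hTB⟩ := hT_linked
    exact conn_of_linkRel_of_connClass_eq hT hTB h
  by_cases hS_linked : ∃ B, linkRel p q S B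
  · obtain ⟨B, hSB⟩ := hS_linked
    exact conn_symm (conn_of_linkRel_of_connClass_eq hS hSB h.symm)
  simp only [not_exists] at hS_linked hT_linked
  rw [connClass_eq_self hS hS_linked, connClass_eq_self hT hT_linked] at h
  exact h ▸ .refl

theorem consistent_iff_forall_conn {A : Finset α} (hA : A ∈ p ∪ q) :
    consistent p q ↔ ∀ S ∈ p ∪ q, conn p q S A := by
  refine ⟨fun h S hS => ?_, fun h => ?_⟩
  · obtain ⟨c, hc⟩ := card_eq_one.1 h
    rw [pjoin_eq_image_connClass] at hc
    have hS_class := mem_singleton.1 (hc ▸ mem_image_of_mem (connClass p q) hS)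
    have hA_class := mem_singleton.1 (hc ▸ mem_image_of_mem (connClass p q) hA)
    exact conn_of_connClass_eq hS hA (hS_class.trans hA_class.symm)
  · have h_class : ∀ S ∈ p ∪ q, connClass p q S = (p ∪ q).sup id := fun S hS => by
      rw [connClass, filter_true_of_mem (p := fun T => conn p q S T) fun T hT => (h S hS).trans (conn_symm (h T hT))]
    rw [consistent, pjoin_eq_image_connClass, image_congr h_class, image_const ⟨A, hA⟩,
      card_singleton]

end Join

section RemoveLabels

variable {p q : Finset (Finset α)} {D S : Finset α}

theorem image_sdiff_union (hpD : ∀ P ∈ p, Disjoint P D) :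
    p ∪ q.image (fun S => S \ D) = (p ∪ q).image (fun S => S \ D) := by
  have hp_fixed : p.image (fun S => S \ D) = p :=
    (image_congr (g := id) fun P hP => sdiff_eq_self_of_disjoint (hpD P hP)).trans image_id
  rw [image_union, hp_fixed]

theorem linkRel_sdiff (hpD : ∀ P ∈ p, Disjoint P D) {T : Finset α} (h : linkRel p q S T) :
    linkRel p (q.image fun S => S \ D) (S \ D) (T \ D) := by
  obtain ⟨hmem, x, hx⟩ := h
  obtain ⟨hxS, hxT⟩ := mem_inter.1 hx
  have hxD : x ∉ D := by
    rcases hmem with ⟨hS, -⟩ | ⟨-, hT⟩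
    exacts [disjoint_left.1 (hpD S hS) hxS, disjoint_left.1 (hpD T hT) hxT]
  refine ⟨?_, x, mem_inter.2 ⟨mem_sdiff.2 ⟨hxS, hxD⟩, mem_sdiff.2 ⟨hxT, hxD⟩⟩⟩
  rcases hmem with ⟨hS, hT⟩ | ⟨hS, hT⟩
  · exact .inl ⟨(sdiff_eq_self_of_disjoint (hpD S hS)).symm ▸ hS, mem_image_of_mem _ hT⟩
  · exact .inr ⟨mem_image_of_mem _ hS, (sdiff_eq_self_of_disjoint (hpD T hT)).symm ▸ hT⟩

theorem conn_sdiff (hpD : ∀ P ∈ p, Disjoint P D) {T : Finset α} (h : conn p q S T) :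
    conn p (q.image fun S => S \ D) (S \ D) (T \ D) :=
  Relation.ReflTransGen.lift (fun S => S \ D) (fun _ _ => linkRel_sdiff hpD) _ _ h

theorem exists_conn_of_linkRel_sdiff (hpD : ∀ P ∈ p, Disjoint P D)
    (hqD : ∀ Q ∈ q, ∀ x ∈ Q, x ∉ D → ∃ P ∈ p, x ∈ P) (hS : S ∈ p ∪ q) {Y : Finset α}
    (h : linkRel p (q.image fun S => S \ D) (S \ D) Y) :
    ∃ T ∈ p ∪ q, T \ D = Y ∧ conn p q S T := by
  obtain ⟨hmem, x, hx⟩ := h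
  obtain ⟨hxSD, hxY⟩ := mem_inter.1 hx
  obtain ⟨hxS, hxD⟩ := mem_sdiff.1 hxSD
  have hY : Y ∈ (p ∪ q).image fun S => S \ D := by
    rw [← image_sdiff_union hpD]
    rcases hmem with ⟨-, hY⟩ | ⟨-, hY⟩
    exacts [mem_union_right _ hY, mem_union_left _ hY]
  obtain ⟨T, hT, rfl⟩ := mem_image.1 hY
  have hxq : ∃ Q ∈ q, x ∈ Q := by
    obtain ⟨Z, hZ, hxZ⟩ : ∃ Z ∈ q.image fun S => S \ D, x ∈ Z := by
      rcases hmem with ⟨-, hY⟩ | ⟨hSD, -⟩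
      exacts [⟨_, hY, hxY⟩, ⟨_, hSD, hxSD⟩]
    obtain ⟨Q, hQ, rfl⟩ := mem_image.1 hZ
    exact ⟨Q, hQ, (mem_sdiff.1 hxZ).1⟩
  obtain ⟨Q, hQ, hxQ⟩ := hxq
  exact ⟨T, hT, rfl, conn_of_mem_of_mem (hqD Q hQ x hxQ hxD) ⟨Q, hQ, hxQ⟩ hS hxS hT
    (mem_sdiff.1 hxY).1⟩

theorem exists_conn_of_conn_sdiff (hpD : ∀ P ∈ p, Disjoint P D)
    (hqD : ∀ Q ∈ q, ∀ x ∈ Q, x ∉ D → ∃ P ∈ p, x ∈ P) (hS : S ∈ p ∪ q) {Y : Finset α}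
    (h : conn p (q.image fun S => S \ D) (S \ D) Y) :
    ∃ T ∈ p ∪ q, T \ D = Y ∧ conn p q S T := by
  induction h with
  | refl => exact ⟨S, hS, rfl, .refl⟩
  | tail _ hlink ih =>
    obtain ⟨T, hT, rfl, hST⟩ := ih
    obtain ⟨T', hT', hT'Y, hTT'⟩ := exists_conn_of_linkRel_sdiff hpD hqD hT hlink
    exact ⟨T', hT', hT'Y, hST.trans hTT'⟩

theorem conn_of_sdiff_eq (hpD : ∀ P ∈ p, Disjoint P D) {A : Finset α} {x : α} (hA : A ∈ p)
    (hxA : x ∈ A) (hS : S ∈ p ∪ q) (h : S \ D = A) : conn p q S A := by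
  rcases mem_union.1 hS with hS | hS
  · rw [← h, sdiff_eq_self_of_disjoint (hpD S hS)]
    exact .refl
  · exact .single ⟨.inr ⟨hS, hA⟩, x, mem_inter.2 ⟨(mem_sdiff.1 (h ▸ hxA)).1, hxA⟩⟩

theorem consistent_iff_consistent_image_sdiff (hpD : ∀ P ∈ p, Disjoint P D)
    (hqD : ∀ Q ∈ q, ∀ x ∈ Q, x ∉ D → ∃ P ∈ p, x ∈ P) {A : Finset α} {x : α} (hA : A ∈ p)
    (hxA : x ∈ A) : consistent p q ↔ consistent p (q.image fun S => S \ D) := by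
  have hA_fixed : A \ D = A := sdiff_eq_self_of_disjoint (hpD A hA)
  rw [consistent_iff_forall_conn (mem_union_left q hA),
    consistent_iff_forall_conn (mem_union_left _ hA), image_sdiff_union hpD]
  refine ⟨fun h X hX => ?_, fun h S hS => ?_⟩
  · obtain ⟨S, hS, rfl⟩ := mem_image.1 hX
    exact hA_fixed ▸ conn_sdiff hpD (h S hS)
  · rw [← image_sdiff_union hpD] at h
    have hSA := h (S \ D) (image_sdiff_union hpD ▸ mem_image_of_mem _ hS)
    obtain ⟨T, hT, hTA, hST⟩ := exists_conn_of_conn_sdiff hpD hqD hS hSA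
    exact hST.trans (conn_of_sdiff_eq hpD hA hxA hT hTA)

end RemoveLabels

theorem mem_lbs {z x : α} {p : Finset (Finset α)} : x ∈ lbs z p ↔ x ≠ z ∧ ∃ P ∈ p, x ∈ P := by
  simp [lbs, mem_sup]

theorem disjoint_sdiff_lbs {z : α} {p q : Finset (Finset α)} {P : Finset α} (hP : P ∈ p) :
    Disjoint P (lbs z q \ lbs z p) :=
  disjoint_left.2 fun _ hxP hxD =>
    (mem_sdiff.1 hxD).2 (mem_lbs.2 ⟨(mem_lbs.1 (mem_sdiff.1 hxD).1).1, P, hP, hxP⟩)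

theorem exists_mem_of_notMem_sdiff_lbs {z x : α} {p q : Finset (Finset α)} {A Q : Finset α}
    (hA : A ∈ p) (hzA : z ∈ A) (hQ : Q ∈ q) (hxQ : x ∈ Q) (hxD : x ∉ lbs z q \ lbs z p) :
    ∃ P ∈ p, x ∈ P := by
  by_cases hxz : x = z
  · exact ⟨A, hA, hxz ▸ hzA⟩
  · have hxp : x ∈ lbs z p := by
      by_contra hxp
      exact hxD (mem_sdiff.2 ⟨mem_lbs.2 ⟨hxz, Q, hQ, hxQ⟩, hxp⟩)
    exact (mem_lbs.1 hxp).2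

theorem remove_extra_labels_general (z : α) (U : Finset α) (p q : Finset (Finset α))
    (hp : IsPattern z U p) :
    consistent p q ↔ consistent p (q.image fun S => S \ (lbs z q \ lbs z p)) := by
  obtain ⟨A, ⟨hA, hzA⟩, -⟩ := hp.2
  exact consistent_iff_consistent_image_sdiff (fun _ => disjoint_sdiff_lbs)
    (fun _ hQ _ hxQ => exists_mem_of_notMem_sdiff_lbs hA hzA hQ hxQ) hA hzA

/-- Removing from `q` all labels not occurring in `p` preserves consistency with `p`. -/
theorem remove_extra_labels (z : α) (U : Finset α) (p q : Finset (Finset α))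
    (hp : IsPattern z U p) (hq : IsPattern z U q) :
    consistent p q ↔ consistent p (q.image fun S => S \ (lbs z q \ lbs z p)) :=
  remove_extra_labels_general z U p q hp

end PatternST
end

section
/- For every finite family D of complete patterns over U, there exists a family C of CS-patterns over U that parity-represents D; in particular, the CS-patterns form a spanning set of the rows of the consistency matrix restricted to complete patterns over GF(2). -/
/-! For complete patterns `p`, `q` over the same label set `B` without empty blocks, `p ∼ q`
holds iff every element of `{0} ∪ B` is reachable from `0` through the blocks of `p ∪ q`; all
other pairs of complete patterns are inconsistent. A complete pattern is a CS-pattern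
`{{0} ∪ X} ∪ {{u} | u ∈ B}` with further blocks `E` added, and one such block `S` can be traded,
modulo 2, for the patterns without `S` whose zero-set is enlarged by some `V ⊊ S`. Indeed, if `A`
is the set reachable from `{0} ∪ X` without `S`, then the number of `V ⊆ S` such that `A ∪ V`
reaches everything is odd exactly when `S` misses `A` while `A ∪ S` reaches everything (by
induction on `S`); removing the `V = S` term leaves the indicator of "`S` meets `A` and `A ∪ S`
reaches everything", i.e. of connectivity with the block `S`. Peeling off the extra blocks one
at a time writes every complete pattern as a GF(2)-sum of CS-patterns. -/

open Finset
open scoped Classical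

namespace PatternST

variable {α : Type*} [DecidableEq α]

/-- A CS-pattern: zero-set `{z} ∪ X` together with the singletons of `Y`. -/
def csPattern (z : α) (X Y : Finset α) : Finset (Finset α) :=
  insert (insert z X) (Y.image fun u => ({u} : Finset α))

/-- `C` parity-represents `D`. -/
def ParityRep (z : α) (U : Finset α) (C D : Finset (Finset (Finset α))) : Prop :=
  ∀ q : Finset (Finset α), IsPattern z U q → Complete z q →
    (C.filter fun p => consistent p q).card % 2 =
    (D.filter fun p => consistent p q).card % 2

end PatternST

open scoped symmDiff

namespace PatternST

variable {α : Type*}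

section Reachability

variable (M : Finset (Finset α))

def Linked (x y : α) : Prop := ∃ T ∈ M, x ∈ T ∧ y ∈ T

instance : Std.Symm (Linked M) := ⟨fun _ _ ⟨T, hT, hx, hy⟩ => ⟨T, hT, hy, hx⟩⟩

def reachSet (W : Set α) : Set α := {y | ∃ x ∈ W, Relation.ReflTransGen (Linked M) x y}

variable {M}

lemma subset_reachSet (W : Set α) : W ⊆ reachSet M W := fun x hx => ⟨x, hx, .refl⟩

lemma reachSet_union (W W' : Set α) :
    reachSet M (W ∪ W') = reachSet M W ∪ reachSet M W' := by
  ext y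
  simp only [reachSet, Set.mem_union, Set.mem_ofPred_eq, or_and_right, exists_or]

lemma reachSet_mono {M' : Finset (Finset α)} (hM : M ⊆ M') {W W' : Set α} (hW : W ⊆ W') :
    reachSet M W ⊆ reachSet M' W' := fun _ ⟨x, hx, h⟩ =>
  ⟨x, hW hx, Relation.ReflTransGen.mono (fun _ _ ⟨T, hT, hT'⟩ => ⟨T, hM hT, hT'⟩) _ _ h⟩

lemma mem_reachSet_of_linked {W : Set α} {y y' : α} (hy : y ∈ reachSet M W)
    (h : Linked M y y') : y' ∈ reachSet M W :=
  let ⟨x, hx, hxy⟩ := hy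
  ⟨x, hx, hxy.tail h⟩

lemma reachSet_subset_of_forall_linked {W C : Set α} (hW : W ⊆ C)
    (hC : ∀ y y', y ∈ C → Linked M y y' → y' ∈ C) : reachSet M W ⊆ C := by
  rintro y ⟨x, hx, h⟩
  induction h with
  | refl => exact hW hx
  | tail _ hl ih => exact hC _ _ ih hl

lemma reachSet_subset {W G : Set α} (hW : W ⊆ G) (hM : ∀ T ∈ M, (T : Set α) ⊆ G) :
    reachSet M W ⊆ G :=
  reachSet_subset_of_forall_linked hW fun _ _ _ ⟨T, hT, _, hy'⟩ => hM T hT hy'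

lemma reachSet_subset_reachSet_iff {W W' : Set α} :
    reachSet M W' ⊆ reachSet M W ↔ W' ⊆ reachSet M W :=
  ⟨(subset_reachSet W').trans, fun h =>
    reachSet_subset_of_forall_linked h fun _ _ hy hl => mem_reachSet_of_linked hy hl⟩

lemma mem_reachSet_iff {a : α} {W : Set α} :
    a ∈ reachSet M W ↔ (W ∩ reachSet M {a}).Nonempty := by
  simp only [reachSet, Set.mem_singleton_iff, exists_eq_left, Set.mem_ofPred_eq]
  exact ⟨fun ⟨x, hx, h⟩ => ⟨x, hx, symm h⟩, fun ⟨x, hx, h⟩ => ⟨x, hx, symm h⟩⟩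

lemma coe_subset_reachSet_of_mem {W : Set α} {T : Finset α} (hT : T ∈ M)
    (h : ((T : Set α) ∩ reachSet M W).Nonempty) : (T : Set α) ⊆ reachSet M W := by
  obtain ⟨x, hxT, hx⟩ := h
  exact fun x' hx' => mem_reachSet_of_linked hx ⟨T, hT, hxT, hx'⟩

lemma reachSet_insert_of_disjoint [DecidableEq α] {W : Set α} {S : Finset α}
    (h : Disjoint (S : Set α) (reachSet M W)) : reachSet (insert S M) W = reachSet M W := by
  refine (reachSet_subset_of_forall_linked (subset_reachSet W) ?_).antisymm
    (reachSet_mono (subset_insert S M) subset_rfl)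
  rintro y y' hy ⟨T, hT, hyT, hy'T⟩
  rcases mem_insert.1 hT with rfl | hT
  · exact absurd hy (h.notMem_of_mem_left hyT)
  · exact mem_reachSet_of_linked hy ⟨T, hT, hyT, hy'T⟩

lemma reachSet_insert_of_inter_nonempty [DecidableEq α] {W : Set α} {S : Finset α}
    (h : ((S : Set α) ∩ reachSet M W).Nonempty) :
    reachSet (insert S M) W = reachSet M (W ∪ S) := by
  have hS : (S : Set α) ⊆ reachSet (insert S M) W :=
    coe_subset_reachSet_of_mem (mem_insert_self S M)
      (h.mono (Set.inter_subset_inter_right _ (reachSet_mono (subset_insert S M) subset_rfl)))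
  refine (reachSet_subset_of_forall_linked (subset_reachSet W |>.trans
      (reachSet_mono subset_rfl Set.subset_union_left)) ?_).antisymm ?_
  · rintro y y' hy ⟨T, hT, hyT, hy'T⟩
    rcases mem_insert.1 hT with rfl | hT
    · exact subset_reachSet _ (Set.mem_union_right W hy'T)
    · exact mem_reachSet_of_linked hy ⟨T, hT, hyT, hy'T⟩
  · exact (reachSet_mono (subset_insert S M) subset_rfl).trans
      (reachSet_subset_reachSet_iff.2 (Set.union_subset (subset_reachSet W) hS))

lemma sum_powerset_reachSet_eq [DecidableEq α] {W G : Set α} {S : Finset α}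
    (hSG : (S : Set α) ⊆ G) :
    ∑ V ∈ S.powerset, (if reachSet M (W ∪ V) = G then (1 : ZMod 2) else 0)
      = if Disjoint (S : Set α) (reachSet M W) ∧ reachSet M (W ∪ S) = G then 1 else 0 := by
  induction S using Finset.induction_on generalizing W with
  | empty =>
    simp only [powerset_empty, sum_singleton, coe_empty, Set.union_empty, Set.empty_disjoint,
      true_and]
  | insert a S ha ih =>
    have hW : ∀ V : Finset α, W ∪ ↑(insert a V) = (W ∪ {a}) ∪ V := fun V => by
      rw [coe_insert, Set.union_assoc, Set.singleton_union]
    rw [coe_insert] at hSG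
    -- the sum splits into those for `(W, S)` and `(W ∪ {a}, S)`
    simp only [sum_powerset_insert ha, hW, ih ((Set.subset_insert a _).trans hSG)]
    simp only [reachSet_union, coe_insert, ← Set.singleton_union, Set.disjoint_union_left,
      Set.disjoint_singleton_left, Set.union_assoc]
    set A := reachSet M W
    set Ra := reachSet M {a}
    set R := reachSet M S
    by_cases haA : a ∈ A
    · have hRa : Ra ⊆ A := reachSet_subset_reachSet_iff.2 (Set.singleton_subset_iff.2 haA)
      simp [haA, ← Set.union_assoc, Set.union_eq_left.2 hRa, CharTwo.add_self_eq_zero]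
    by_cases hSA : Disjoint (S : Set α) A
    swap
    · simp [hSA]
    by_cases hSRa : Disjoint (S : Set α) Ra
    · have haR : a ∉ R := fun h => (Set.disjoint_iff_inter_eq_empty.1 hSRa ▸
        mem_reachSet_iff.1 h).ne_empty rfl
      have hG : A ∪ R ≠ G := fun h => by
        have := hSG (Set.mem_insert a _)
        rw [← h] at this
        exact this.elim haA haR
      simp [haA, hSA, hSRa, hG, Set.disjoint_union_right]
    · have hRa : Ra ⊆ R := reachSet_subset_reachSet_iff.2 (Set.singleton_subset_iff.2
        (mem_reachSet_iff.2 (Set.not_disjoint_iff_nonempty_inter.1 hSRa)))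
      simp [haA, hSA, hSRa, Set.union_eq_right.2 hRa, Set.disjoint_union_right]

lemma reachSet_insert_parity [DecidableEq α] {W G : Set α} {S : Finset α} (hS : S.Nonempty)
    (hSG : (S : Set α) ⊆ G) :
    (if reachSet (insert S M) W = G then (1 : ZMod 2) else 0)
      = ∑ V ∈ S.powerset.erase S, if reachSet M (W ∪ V) = G then 1 else 0 := by
  rw [sum_erase_eq_sub (mem_powerset_self S), sum_powerset_reachSet_eq hSG]
  by_cases h : Disjoint (S : Set α) (reachSet M W)
  · have hne : reachSet M W ≠ G := fun hW => by
      obtain ⟨s, hs⟩ := hS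
      exact h.notMem_of_mem_left hs (hW ▸ hSG hs)
    simp [reachSet_insert_of_disjoint h, hne, h]
  · rw [reachSet_insert_of_inter_nonempty (Set.not_disjoint_iff_nonempty_inter.1 h)]
    simp [h, ZMod.neg_eq_self_mod_two]

end Reachability

lemma sum_symmDiff_of_charTwo {β R : Type*} [DecidableEq β] [Ring R] [CharP R 2]
    (f : β → R) (s t : Finset β) : ∑ x ∈ s ∆ t, f x = ∑ x ∈ s, f x + ∑ x ∈ t, f x := by
  rw [symmDiff_eq_sup_sdiff_inf, sup_eq_union, inf_eq_inter,
    sum_sdiff_eq_sub inter_subset_union, ← sum_union_inter, CharTwo.sub_eq_add]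

variable [DecidableEq α] {z : α} {U : Finset α} {p q : Finset (Finset α)}

section Consistency

lemma linkRel_comm (p q : Finset (Finset α)) : linkRel p q = linkRel q p := by
  ext S T
  simp only [linkRel, or_comm]

instance : Std.Symm (linkRel p q) :=
  ⟨fun _ _ ⟨h, hne⟩ => ⟨by tauto, by rwa [inter_comm]⟩⟩

instance : Std.Symm (conn p q) := inferInstanceAs (Std.Symm (Relation.ReflTransGen _))

lemma consistent_comm : consistent p q ↔ consistent q p := by
  rw [consistent, consistent, pjoin, pjoin, conn, conn, linkRel_comm, union_comm]

lemma mem_lbs_s17 {T : Finset α} {x : α} (hT : T ∈ p) (hx : x ∈ T) (hxz : x ≠ z) : x ∈ lbs z p :=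
  mem_erase.2 ⟨hxz, mem_sup.2 ⟨T, hT, hx⟩⟩

lemma subset_insert_lbs {T : Finset α} (hT : T ∈ p) : T ⊆ insert z (lbs z p) := fun x hx => by
  by_cases hxz : x = z
  · exact hxz ▸ mem_insert_self _ _
  · exact mem_insert_of_mem (mem_lbs_s17 hT hx hxz)

lemma Complete.singleton_mem (hpc : Complete z p) {u : α} (hu : u ∈ lbs z p) :
    ({u} : Finset α) ∈ p :=
  (mem_filter.1 (hpc ▸ hu : u ∈ sing z p)).2

lemma conn.nonempty {S T : Finset α} (h : conn p q S T) (hS : S.Nonempty) : T.Nonempty := by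
  induction h with
  | refl => exact hS
  | tail _ hl _ => exact hl.2.mono inter_subset_right

lemma conn.coe_subset_reachSet {Zp T : Finset α} (h : conn p q Zp T) (hZp : Zp ∈ p ∪ q)
    (hzZp : z ∈ Zp) : ↑T ⊆ reachSet (p ∪ q) {z} := by
  induction h with
  | refl => exact coe_subset_reachSet_of_mem hZp ⟨z, hzZp, subset_reachSet _ rfl⟩
  | tail _ hl ih =>
    obtain ⟨hor, y, hy⟩ := hl
    rw [mem_inter] at hy
    exact coe_subset_reachSet_of_mem (by rcases hor with h | h <;> simp [h.2])
      ⟨y, hy.2, ih hy.1⟩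

lemma IsPattern.conn_of_zero_mem (hp : IsPattern z U p) {Zp T : Finset α} (hZp : Zp ∈ p)
    (hzZp : z ∈ Zp) (hT : T ∈ p ∪ q) (hzT : z ∈ T) : conn p q Zp T := by
  rcases mem_union.1 hT with hT | hT
  · exact hp.2.unique ⟨hZp, hzZp⟩ ⟨hT, hzT⟩ ▸ .refl
  · exact .single ⟨Or.inl ⟨hZp, hT⟩, z, mem_inter.2 ⟨hzZp, hzT⟩⟩

lemma IsPattern.consistent_iff_forall_conn (hp : IsPattern z U p) {Zp : Finset α}
    (hZp : Zp ∈ p) (hzZp : z ∈ Zp) : consistent p q ↔ ∀ T ∈ p ∪ q, conn p q Zp T := by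
  set cls := fun S => ((p ∪ q).filter fun T => conn p q S T).sup id
  have hZp' : Zp ∈ p ∪ q := mem_union_left q hZp
  constructor
  · intro h T hT
    obtain ⟨c, hc⟩ := card_eq_one.1 h
    have hcls : ∀ S ∈ p ∪ q, cls S = c := fun S hS =>
      mem_singleton.1 (hc ▸ mem_image_of_mem cls hS)
    have hz : z ∈ cls T :=
      hcls T hT ▸ hcls Zp hZp' ▸ mem_sup.2 ⟨Zp, mem_filter.2 ⟨hZp', .refl⟩, hzZp⟩
    obtain ⟨T', hT', hzT'⟩ := mem_sup.1 hz
    obtain ⟨hT'm, hTT'⟩ := mem_filter.1 hT'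
    exact (hp.conn_of_zero_mem hZp hzZp hT'm hzT').trans (symm hTT')
  · intro h
    have hcls : ∀ S ∈ p ∪ q, cls S = (p ∪ q).sup id := fun S hS => by
      simp only [cls]
      rw [filter_true_of_mem fun T hT => (show conn p q S T from (symm (h S hS)).trans (h T hT))]
    refine card_eq_one.2 ⟨(p ∪ q).sup id, eq_singleton_iff_unique_mem.2 ⟨?_, ?_⟩⟩
    · exact mem_image.2 ⟨Zp, hZp', hcls Zp hZp'⟩
    · rintro _ hc
      obtain ⟨S, hS, rfl⟩ := mem_image.1 hc
      exact hcls S hS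

lemma IsPattern.lbs_subset_of_consistent (hp : IsPattern z U p) (hpc : Complete z p)
    (h : consistent p q) : lbs z p ⊆ lbs z q := by
  obtain ⟨Zp, ⟨hZp, hzZp⟩, -⟩ := hp.2
  intro u hu
  have huz : u ≠ z := (mem_erase.1 hu).1
  have hup := hpc.singleton_mem hu
  rcases (hp.consistent_iff_forall_conn hZp hzZp).1 h {u} (mem_union_left q hup)
    |>.cases_tail with hZu | ⟨T, -, hor, y, hy⟩
  · exact absurd (mem_singleton.1 (hZu ▸ hzZp)).symm huz
  · obtain ⟨hyT, rfl⟩ : y ∈ T ∧ y = u := by simpa only [mem_inter, mem_singleton] using hy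
    rcases hor with ⟨-, hq⟩ | ⟨hq, -⟩
    · exact mem_lbs_s17 hq (mem_singleton_self y) huz
    · exact mem_lbs_s17 hq hyT huz

lemma IsPattern.nonempty_of_consistent (hp : IsPattern z U p) (h : consistent p q) :
    ∀ T ∈ p ∪ q, T.Nonempty := by
  obtain ⟨Zp, ⟨hZp, hzZp⟩, -⟩ := hp.2
  exact fun T hT => ((hp.consistent_iff_forall_conn hZp hzZp).1 h T hT).nonempty ⟨z, hzZp⟩

end Consistency

section SameLabels

variable (hp : IsPattern z U p) (hpc : Complete z p) (hqc : Complete z q)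
  (hlbs : lbs z p = lbs z q)
include hp hpc hqc hlbs

lemma IsPattern.conn_of_mem_inter {Zp T T' : Finset α} {x : α} (hZp : Zp ∈ p) (hzZp : z ∈ Zp)
    (hT : T ∈ p ∪ q) (hZpT : conn p q Zp T) (hT' : T' ∈ p ∪ q) (hxT : x ∈ T) (hxT' : x ∈ T') :
    conn p q Zp T' := by
  by_cases hxz : x = z
  · exact hp.conn_of_zero_mem hZp hzZp hT' (hxz ▸ hxT')
  have hx : x ∈ lbs z p := by
    rcases mem_union.1 hT with hT | hT
    · exact mem_lbs_s17 hT hxT hxz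
    · exact hlbs ▸ mem_lbs_s17 hT hxT hxz
  have hxp := hpc.singleton_mem hx
  have hxq := hqc.singleton_mem (hlbs ▸ hx)
  have link : ∀ A ∈ p ∪ q, x ∈ A → linkRel p q A {x} := fun A hA hxA =>
    ⟨by rcases mem_union.1 hA with hA | hA <;> tauto,
      ⟨x, mem_inter.2 ⟨hxA, mem_singleton_self x⟩⟩⟩
  exact (hZpT.tail (link T hT hxT)).tail (symm (link T' hT' hxT'))

lemma IsPattern.consistent_iff_reachSet (hne : ∀ T ∈ p ∪ q, T.Nonempty) :
    consistent p q ↔ reachSet (p ∪ q) {z} = ↑(insert z (lbs z p)) := by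
  obtain ⟨Zp, ⟨hZp, hzZp⟩, -⟩ := hp.2
  have hblock : ∀ T ∈ p ∪ q, T ⊆ insert z (lbs z p) := fun T hT => by
    rcases mem_union.1 hT with hT | hT
    exacts [subset_insert_lbs hT, hlbs ▸ subset_insert_lbs hT]
  rw [hp.consistent_iff_forall_conn hZp hzZp]
  constructor
  · intro h
    refine (reachSet_subset (by simp) fun T hT => mod_cast hblock T hT).antisymm fun x hx => ?_
    rcases mem_insert.1 hx with rfl | hx
    · exact subset_reachSet _ rfl
    · exact (h _ (mem_union_left q (hpc.singleton_mem hx))).coe_subset_reachSet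
        (mem_union_left q hZp) hzZp (mem_singleton_self x)
  · intro h T hT
    obtain ⟨x, hxT⟩ := hne T hT
    have hx : x ∈ reachSet (p ∪ q) {z} := h ▸ hblock T hT hxT
    refine reachSet_subset_of_forall_linked (C := {x | ∀ T ∈ p ∪ q, x ∈ T → conn p q Zp T})
      ?_ ?_ hx T hT hxT
    · rintro _ rfl T hT hzT
      exact hp.conn_of_zero_mem hZp hzZp hT hzT
    · rintro y y' hy ⟨T'', hT'', hyT'', hy'T''⟩ T hT hy'T
      exact hp.conn_of_mem_inter hpc hqc hlbs hZp hzZp hT'' (hy T'' hT'' hyT'') hT hy'T'' hy'T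

end SameLabels

lemma IsPattern.consistent_iff_of_complete (hp : IsPattern z U p) (hpc : Complete z p)
    (hq : IsPattern z U q) (hqc : Complete z q) (hpne : ∀ T ∈ p, T.Nonempty) :
    consistent p q ↔ (lbs z q = lbs z p ∧ ∀ T ∈ q, T.Nonempty) ∧
      reachSet (p ∪ q) {z} = ↑(insert z (lbs z p)) := by
  constructor
  · intro h
    have hlbs := (hp.lbs_subset_of_consistent hpc h).antisymm
      (hq.lbs_subset_of_consistent hqc (consistent_comm.1 h))
    exact ⟨⟨hlbs.symm, fun T hT => hp.nonempty_of_consistent h T (mem_union_right p hT)⟩,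
      (hp.consistent_iff_reachSet hpc hqc hlbs (hp.nonempty_of_consistent h)).1 h⟩
  · rintro ⟨⟨hlbs, hqne⟩, h⟩
    refine (hp.consistent_iff_reachSet hpc hqc hlbs.symm fun T hT => ?_).2 h
    rcases mem_union.1 hT with hT | hT
    exacts [hpne T hT, hqne T hT]

section CSPatterns

variable {B X : Finset α} {E : Finset (Finset α)}

lemma csPattern_union_eq_insert :
    csPattern z X B ∪ E = insert (insert z X) (B.image (fun u => {u}) ∪ E) :=
  insert_union _ _ _

lemma lbs_csPattern_union (hzB : z ∉ B) (hX : X ⊆ B) (hE : ∀ T ∈ E, T ⊆ B) :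
    lbs z (csPattern z X B ∪ E) = B := by
  ext x
  simp only [lbs, csPattern_union_eq_insert, mem_erase, mem_sup, mem_insert, mem_union,
    mem_image, id_eq]
  constructor
  · rintro ⟨hxz, T, rfl | ⟨u, hu, rfl⟩ | hT, hxT⟩
    · exact hX ((mem_insert.1 hxT).resolve_left hxz)
    · exact mem_singleton.1 hxT ▸ hu
    · exact hE T hT hxT
  · exact fun hx => ⟨fun h => hzB (h ▸ hx), {x}, Or.inr (Or.inl ⟨x, hx, rfl⟩), mem_singleton_self x⟩

lemma complete_csPattern_union (hzB : z ∉ B) (hX : X ⊆ B) (hE : ∀ T ∈ E, T ⊆ B) :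
    Complete z (csPattern z X B ∪ E) := by
  rw [Complete, sing, lbs_csPattern_union hzB hX hE, eq_comm, filter_eq_self]
  exact fun u hu => mem_union_left E (mem_insert_of_mem (mem_image_of_mem _ hu))

lemma isPattern_csPattern_union (hz : z ∉ U) (hB : B ⊆ U) (hX : X ⊆ B) (hE : ∀ T ∈ E, T ⊆ B) :
    IsPattern z U (csPattern z X B ∪ E) := by
  have hzB : z ∉ B := fun h => hz (hB h)
  rw [csPattern_union_eq_insert]
  refine ⟨fun T hT => ?_, insert z X, ⟨mem_insert_self _ _, mem_insert_self z X⟩, ?_⟩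
  · rcases mem_insert.1 hT with rfl | hT
    · exact insert_subset_insert z (hX.trans hB)
    · refine (subset_insert z U).trans' (hB.trans' ?_)
      rcases mem_union.1 hT with hT | hT
      · obtain ⟨u, hu, rfl⟩ := mem_image.1 hT
        exact singleton_subset_iff.2 hu
      · exact hE T hT
  · rintro T ⟨hT, hzT⟩
    rcases mem_insert.1 hT with rfl | hT
    · rfl
    rcases mem_union.1 hT with hT | hT
    · obtain ⟨u, hu, rfl⟩ := mem_image.1 hT
      exact absurd (mem_singleton.1 hzT ▸ hu) hzB
    · exact absurd (hE T hT hzT) hzB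

lemma consistent_csPattern_union_iff (hz : z ∉ U) (hB : B ⊆ U) (hX : X ⊆ B)
    (hE : ∀ T ∈ E, T ⊆ B) (hEne : ∀ T ∈ E, T.Nonempty) (hq : IsPattern z U q)
    (hqc : Complete z q) :
    consistent (csPattern z X B ∪ E) q ↔ (lbs z q = B ∧ ∀ T ∈ q, T.Nonempty) ∧
      reachSet (B.image (fun u => {u}) ∪ E ∪ q) ↑(insert z X) = ↑(insert z B) := by
  have hzB : z ∉ B := fun h => hz (hB h)
  have hne : ∀ T ∈ csPattern z X B ∪ E, T.Nonempty := by
    simp only [csPattern_union_eq_insert, mem_insert, mem_union, mem_image]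
    rintro T (rfl | ⟨u, -, rfl⟩ | hT)
    exacts [insert_nonempty z X, singleton_nonempty u, hEne T hT]
  rw [(isPattern_csPattern_union hz hB hX hE).consistent_iff_of_complete
    (complete_csPattern_union hzB hX hE) hq hqc hne, lbs_csPattern_union hzB hX hE,
    csPattern_union_eq_insert, insert_union,
    reachSet_insert_of_inter_nonempty ⟨z, by simp, subset_reachSet _ (Set.mem_singleton z)⟩,
    Set.union_eq_right.2 (by simp)]

lemma consistent_csPattern_union_insert_parity (hz : z ∉ U) (hB : B ⊆ U) (hX : X ⊆ B)
    (hE : ∀ T ∈ E, T ⊆ B) (hEne : ∀ T ∈ E, T.Nonempty) {S : Finset α} (hSB : S ⊆ B)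
    (hS : S.Nonempty) (hq : IsPattern z U q) (hqc : Complete z q) :
    (if consistent (csPattern z X B ∪ insert S E) q then (1 : ZMod 2) else 0)
      = ∑ V ∈ S.powerset.erase S,
          if consistent (csPattern z (X ∪ V) B ∪ E) q then 1 else 0 := by
  have hXV : ∀ V ∈ S.powerset.erase S, X ∪ V ⊆ B := fun V hV =>
    union_subset hX ((mem_powerset.1 (mem_of_mem_erase hV)).trans hSB)
  rw [if_congr (consistent_csPattern_union_iff hz hB hX
      (forall_mem_insert _ _ _ |>.2 ⟨hSB, hE⟩) (forall_mem_insert _ _ _ |>.2 ⟨hS, hEne⟩) hq hqc)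
      rfl rfl,
    sum_congr rfl fun V hV =>
      if_congr (consistent_csPattern_union_iff hz hB (hXV V hV) hE hEne hq hqc) rfl rfl]
  by_cases hq' : lbs z q = B ∧ ∀ T ∈ q, T.Nonempty
  · simp only [eq_true hq', true_and, union_insert, insert_union, coe_insert, coe_union,
      ← Set.insert_union]
    exact reachSet_insert_parity hS ((coe_subset.2 hSB).trans (Set.subset_insert z _))
  · simp [hq']

end CSPatterns

section Span

def InCSSpan (z : α) (U : Finset α) (f : Finset (Finset α) → ZMod 2) : Prop :=
  ∃ C : Finset (Finset (Finset α)),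
    (∀ c ∈ C, ∃ X Y : Finset α, X ⊆ Y ∧ Y ⊆ U ∧ c = csPattern z X Y) ∧
    ∀ q, IsPattern z U q → Complete z q → ∑ c ∈ C, (if consistent c q then 1 else 0) = f q

lemma InCSSpan.congr {f g : Finset (Finset α) → ZMod 2} (hf : InCSSpan z U f)
    (h : ∀ q, IsPattern z U q → Complete z q → f q = g q) : InCSSpan z U g :=
  let ⟨C, hC, hCf⟩ := hf
  ⟨C, hC, fun q hq hqc => (hCf q hq hqc).trans (h q hq hqc)⟩

lemma inCSSpan_sum {ι : Type*} {s : Finset ι} {f : ι → Finset (Finset α) → ZMod 2}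
    (h : ∀ i ∈ s, InCSSpan z U (f i)) : InCSSpan z U (∑ i ∈ s, f i) := by
  refine sum_induction f (InCSSpan z U) ?_ ⟨∅, by simp, fun q _ _ => by simp⟩ h
  rintro f g ⟨C, hC, hCf⟩ ⟨C', hC', hCg⟩
  refine ⟨C ∆ C', fun c hc => ?_, fun q hq hqc => ?_⟩
  · rcases mem_symmDiff.1 hc with ⟨hc, -⟩ | ⟨hc, -⟩
    exacts [hC c hc, hC' c hc]
  · rw [sum_symmDiff_of_charTwo, hCf q hq hqc, hCg q hq hqc, Pi.add_apply]

lemma inCSSpan_csPattern_union (hz : z ∉ U) {B : Finset α} (hB : B ⊆ U) {E : Finset (Finset α)}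
    (hE : ∀ T ∈ E, T ⊆ B) (hEne : ∀ T ∈ E, T.Nonempty) {X : Finset α} (hX : X ⊆ B) :
    InCSSpan z U fun q => if consistent (csPattern z X B ∪ E) q then 1 else 0 := by
  induction E using Finset.induction_on generalizing X with
  | empty =>
    exact ⟨{csPattern z X B}, by simpa using ⟨X, B, hX, hB, rfl⟩,
      fun q _ _ => by rw [sum_singleton, union_empty]⟩
  | insert S E _ ih =>
    rw [forall_mem_insert] at hE hEne
    refine (inCSSpan_sum (s := S.powerset.erase S) fun V hV => ih hE.2 hEne.2 (X := X ∪ V)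
      (union_subset hX ((mem_powerset.1 (mem_of_mem_erase hV)).trans hE.1))).congr
      fun q hq hqc => ?_
    rw [Finset.sum_apply,
      consistent_csPattern_union_insert_parity hz hB hX hE.2 hEne.2 hE.1 hEne.1 hq hqc]

lemma IsPattern.lbs_subset (hp : IsPattern z U p) : lbs z p ⊆ U := fun x hx => by
  obtain ⟨hxz, T, hT, hxT⟩ := by simpa only [lbs, mem_erase, mem_sup, id_eq] using hx
  exact (mem_insert.1 (hp.1 T hT hxT)).resolve_left hxz

lemma Complete.eq_csPattern_union (hpc : Complete z p) {Zp : Finset α}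
    (hZp : Zp ∈ p) (hzZp : z ∈ Zp) : p = csPattern z (Zp.erase z) (lbs z p) ∪ p.erase Zp := by
  have hsing : (lbs z p).image (fun u => {u}) ⊆ p.erase Zp := by
    refine image_subset_iff.2 fun u hu => mem_erase.2 ⟨fun h => ?_, hpc.singleton_mem hu⟩
    exact (mem_erase.1 hu).1 (mem_singleton.1 (h ▸ hzZp)).symm
  rw [csPattern_union_eq_insert, insert_erase hzZp, union_eq_right.2 hsing, insert_erase hZp]

lemma IsPattern.inCSSpan (hz : z ∉ U) (hp : IsPattern z U p) (hpc : Complete z p) :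
    InCSSpan z U fun q => if consistent p q then 1 else 0 := by
  by_cases hne : ∀ T ∈ p, T.Nonempty
  · obtain ⟨Zp, ⟨hZp, hzZp⟩, hZpu⟩ := hp.2
    have hE : ∀ T ∈ p.erase Zp, T ⊆ lbs z p := fun T hT x hxT => by
      obtain ⟨hTZp, hT⟩ := mem_erase.1 hT
      exact mem_lbs_s17 hT hxT fun hxz => hTZp (hZpu T ⟨hT, hxz ▸ hxT⟩)
    rw [hpc.eq_csPattern_union hZp hzZp]
    exact inCSSpan_csPattern_union hz hp.lbs_subset hE (fun T hT => hne T (mem_of_mem_erase hT))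
      fun x hx => mem_lbs_s17 hZp (mem_of_mem_erase hx) (ne_of_mem_erase hx)
  · refine ⟨∅, by simp, fun q _ _ => ?_⟩
    exact (if_neg fun h => hne fun T hT => hp.nonempty_of_consistent h T (mem_union_left q hT)).symm

end Span

/-- Every finite family of complete patterns is parity-represented by a family of
CS-patterns. -/
theorem csPatterns_parity_represent (z : α) (U : Finset α) (hz : z ∉ U)
    (D : Finset (Finset (Finset α)))
    (hD : ∀ p ∈ D, IsPattern z U p ∧ Complete z p) :
    ∃ C : Finset (Finset (Finset α)),
      (∀ c ∈ C, ∃ X Y : Finset α, X ⊆ Y ∧ Y ⊆ U ∧ c = csPattern z X Y) ∧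
      ParityRep z U C D := by
  obtain ⟨C, hC, hCD⟩ := inCSSpan_sum fun p hp => (hD p hp).1.inCSSpan hz (hD p hp).2
  refine ⟨C, hC, fun q hq hqc => ?_⟩
  rw [← ZMod.natCast_eq_natCast_iff', natCast_card_filter, natCast_card_filter, hCD q hq hqc,
    Finset.sum_apply]

end PatternST
end
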